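/- Let R be a reduced root system in V whose simple system S = {s_1, …, s_n} is a basis of V, with reflection group W, positive system R_+ and closed Weyl chamber C̄. Suppose the simple root s_i is the only element of S lying in its orbit R^i = {w s_i : w ∈ W}. Then for every ε > 0, ⋃_{w ∈ W} {x ∈ w C̄ : 0 ≤ ⟨w s_i, x⟩ ≤ ε} = ⋃_{α ∈ R^i} {x ∈ V : 0 ≤ ⟨α, x⟩ ≤ ε}. -/

import Mathlib

open scoped RealInnerProductSpace

/-!
Every point is moved into the closed chamber by some `w ∈ W`: maximise `⟪w d, x⟫` over the finite
group `W`, for `d` in the open chamber. It then suffices to show `⟪s i, y⟫ ≤ ⟪β, y⟫` for `y` in the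
chamber and every `β` in the orbit of `s i` with `0 ≤ ⟪β, y⟫`. If `β ≠ s i` is positive, some simple
root has `⟪s j, β⟫ > 0`, and `σ_j β = β - t • s j` with `t > 0` is again a positive root of the
orbit: were it negative, `β` would be a multiple of `s j`, hence `s j` itself by reducedness, and
`s i` is the only simple root in the orbit. Its height is smaller and `⟪σ_j β, y⟫ ≤ ⟪β, y⟫`, so a
counterexample of minimal height cannot exist. A negative `β` is handled through `-β = σ_β β`.
-/

/-- The reflection `σ_α` in the hyperplane orthogonal to `α`:
`σ_α (v) = v - 2 (⟪α, v⟫ / ⟪α, α⟫) • α`. -/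
noncomputable def rootReflection {V : Type*} [NormedAddCommGroup V]
    [InnerProductSpace ℝ V] (α : V) (v : V) : V :=
  v - (2 * ⟪α, v⟫ / ⟪α, α⟫) • α

open Set Submodule

section

variable {V : Type*} [NormedAddCommGroup V] [InnerProductSpace ℝ V]

namespace Module.Basis

variable {ι : Type*} [Fintype ι]

theorem eq_smul_of_repr_eq_zero {R M : Type*} [Semiring R] [AddCommMonoid M] [Module R M]
    (s : Basis ι R M) {x : M} {j : ι} (h : ∀ k ≠ j, s.repr x k = 0) : x = s.repr x j • s j := by
  classical
  conv_lhs => rw [← s.sum_repr x]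
  exact Finset.sum_eq_single j (fun k _ hk => by rw [h k hk, zero_smul])
    (fun hj => absurd (Finset.mem_univ j) hj)

theorem exists_inner_pos_of_repr_nonneg (s : Basis ι ℝ V) {x : V} (hx : x ≠ 0)
    (h : ∀ j, 0 ≤ s.repr x j) : ∃ j, 0 < ⟪s j, x⟫ := by
  by_contra! hle
  have : ⟪x, x⟫ ≤ 0 := by
    nth_rewrite 1 [← s.sum_repr x]
    rw [sum_inner]
    exact Finset.sum_nonpos fun j _ => by
      rw [real_inner_smul_left]; exact mul_nonpos_of_nonneg_of_nonpos (h j) (hle j)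
  exact hx (real_inner_self_nonpos.1 this)

theorem exists_forall_inner_pos (s : Basis ι ℝ V) : ∃ d : V, ∀ j, 0 < ⟪s j, d⟫ := by
  have := s.finiteDimensional_of_finite
  refine ⟨(InnerProductSpace.toDual ℝ V).symm (LinearMap.toContinuousLinearMap s.sumCoords),
    fun j => ?_⟩
  rw [real_inner_comm, InnerProductSpace.toDual_symm_apply, LinearMap.coe_toContinuousLinearMap',
    sumCoords_self_apply]
  exact one_pos

end Module.Basis

theorem inner_rootReflection_left (α v y : V) :
    ⟪rootReflection α v, y⟫ = ⟪v, y⟫ - 2 * ⟪α, v⟫ / ⟪α, α⟫ * ⟪α, y⟫ := by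
  rw [rootReflection, inner_sub_left, real_inner_smul_left]

theorem rootReflection_self {α : V} (hα : α ≠ 0) : rootReflection α α = -α := by
  rw [rootReflection, mul_div_assoc, div_self (real_inner_self_pos.2 hα).ne', mul_one, two_smul,
    sub_add_cancel_left]

theorem coe_reflection_orthogonal_span_singleton (α : V) :
    ⇑(reflection (ℝ ∙ α)ᗮ) = rootReflection α := by
  ext v
  rw [reflection_orthogonal_apply, reflection_singleton_apply, rootReflection,
    real_inner_self_eq_norm_sq, RCLike.ofReal_real_eq_id, id, mul_div_assoc, mul_smul, two_smul,
    two_smul]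
  abel

def reflectionGroup (R : Set V) : Subgroup (V ≃ₗᵢ[ℝ] V) :=
  Subgroup.closure {g | ∃ α ∈ R, ∀ v, g v = rootReflection α v}

theorem reflection_mem_reflectionGroup {R : Set V} {α : V} (hα : α ∈ R) :
    reflection (ℝ ∙ α)ᗮ ∈ reflectionGroup R :=
  Subgroup.subset_closure ⟨α, hα, fun v => by rw [coe_reflection_orthogonal_span_singleton]⟩

theorem image_eq_of_mem_reflectionGroup {R : Set V}
    (hR : ∀ α ∈ R, rootReflection α '' R = R) {w : V ≃ₗᵢ[ℝ] V} (hw : w ∈ reflectionGroup R) :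
    w '' R = R := by
  induction hw using Subgroup.closure_induction with
  | mem g hg =>
    obtain ⟨α, hα, hg⟩ := hg
    rw [show ⇑g = rootReflection α from funext hg, hR α hα]
  | one => exact image_id R
  | mul a b _ _ ha hb => rw [LinearIsometryEquiv.coe_mul, image_comp, hb, ha]
  | inv a _ ha =>
    conv_lhs => rw [← ha]
    rw [← image_comp, LinearIsometryEquiv.coe_inv, LinearIsometryEquiv.symm_comp_self, image_id]

theorem finite_reflectionGroup {R : Set V} (hfin : R.Finite) (hspan : span ℝ R = ⊤)
    (hR : ∀ α ∈ R, rootReflection α '' R = R) : Finite (reflectionGroup R) := by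
  have := hfin.to_subtype
  refine Finite.of_injective (fun w (α : R) => (⟨w.1 α, ?_⟩ : R)) fun w w' h => ?_
  · exact (image_eq_of_mem_reflectionGroup hR w.2).subset (mem_image_of_mem _ α.2)
  · have : (w.1 : V →ₗ[ℝ] V) = w'.1 := LinearMap.ext_on hspan fun α hα =>
      congrArg Subtype.val (congrFun h ⟨α, hα⟩)
    exact Subtype.ext <| LinearIsometryEquiv.toLinearEquiv_injective <|
      LinearEquiv.toLinearMap_injective this

theorem exists_mem_symm_apply_mem_chamber {ι : Type*} (s : ι → V) {W : Subgroup (V ≃ₗᵢ[ℝ] V)}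
    [Finite W] (hsW : ∀ j, reflection (ℝ ∙ s j)ᗮ ∈ W) {d : V} (hd : ∀ j, 0 < ⟪s j, d⟫) (x : V) :
    ∃ w ∈ W, ∀ j, 0 ≤ ⟪s j, w.symm x⟫ := by
  obtain ⟨w, hw⟩ := Finite.exists_max fun w : W => ⟪w.1 d, x⟫
  refine ⟨w, w.2, fun j => ?_⟩
  have hle := hw ⟨w * reflection (ℝ ∙ s j)ᗮ, mul_mem w.2 (hsW j)⟩
  simp only [LinearIsometryEquiv.coe_mul, Function.comp_apply,
    LinearIsometryEquiv.inner_map_eq_flip, coe_reflection_orthogonal_span_singleton,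
    inner_rootReflection_left, sub_le_self_iff] at hle
  have hs : 0 < ⟪s j, s j⟫ := real_inner_self_pos.2 fun h => by simpa [h] using hd j
  exact nonneg_of_mul_nonneg_right hle (div_pos (mul_pos two_pos (hd j)) hs)

def reflectionOrbit (R : Set V) (v : V) : Set V :=
  {x | ∃ w ∈ reflectionGroup R, x = w v}

section Orbit

variable {R : Set V} {v β : V}

theorem reflectionOrbit_subset (hR : ∀ α ∈ R, rootReflection α '' R = R) (hv : v ∈ R) :
    reflectionOrbit R v ⊆ R := by
  rintro _ ⟨w, hw, rfl⟩
  exact (image_eq_of_mem_reflectionGroup hR hw).subset (mem_image_of_mem w hv)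

theorem ne_zero_of_mem_reflectionOrbit (hv : v ≠ 0) (hβ : β ∈ reflectionOrbit R v) : β ≠ 0 := by
  obtain ⟨w, -, rfl⟩ := hβ
  exact (map_ne_zero_iff w w.injective).2 hv

theorem rootReflection_mem_reflectionOrbit {α : V} (hα : α ∈ R) (hβ : β ∈ reflectionOrbit R v) :
    rootReflection α β ∈ reflectionOrbit R v := by
  obtain ⟨w, hw, rfl⟩ := hβ
  refine ⟨reflection (ℝ ∙ α)ᗮ * w, mul_mem (reflection_mem_reflectionGroup hα) hw, ?_⟩
  rw [LinearIsometryEquiv.coe_mul, Function.comp_apply, coe_reflection_orthogonal_span_singleton]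

theorem neg_mem_reflectionOrbit (hR : ∀ α ∈ R, rootReflection α '' R = R) (hv : v ∈ R) (hv0 : v ≠ 0)
    (hβ : β ∈ reflectionOrbit R v) : -β ∈ reflectionOrbit R v := by
  rw [← rootReflection_self (ne_zero_of_mem_reflectionOrbit hv0 hβ)]
  exact rootReflection_mem_reflectionOrbit (reflectionOrbit_subset hR hv hβ) hβ

end Orbit

structure IsSimpleSystem {ι : Type*} (R : Set V) (s : Module.Basis ι ℝ V) : Prop where
  finite : R.Finite
  image_rootReflection : ∀ α ∈ R, rootReflection α '' R = R
  reduced : ∀ α ∈ R, {x : V | ∃ c : ℝ, x = c • α} ∩ R = {α, -α}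
  basis_mem : ∀ j, s j ∈ R
  repr_nonneg_or_nonpos : ∀ α ∈ R, (∀ j, 0 ≤ s.repr α j) ∨ (∀ j, s.repr α j ≤ 0)

namespace IsSimpleSystem

variable {ι : Type*} [Fintype ι] {R : Set V} {s : Module.Basis ι ℝ V} {i : ι} {β y : V}

theorem exists_sub_smul_mem_reflectionOrbit
    (hS : IsSimpleSystem R s) (honly : ∀ j, s j ∈ reflectionOrbit R (s i) → j = i)
    (hβ : β ∈ reflectionOrbit R (s i)) (hβpos : ∀ j, 0 ≤ s.repr β j) (hβi : β ≠ s i) :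
    ∃ j, ∃ t : ℝ, 0 < t ∧ β - t • s j ∈ reflectionOrbit R (s i) ∧
      ∀ k, 0 ≤ s.repr (β - t • s j) k := by
  have hsub := reflectionOrbit_subset hS.image_rootReflection (hS.basis_mem i)
  obtain ⟨j, hj⟩ :=
    s.exists_inner_pos_of_repr_nonneg (ne_zero_of_mem_reflectionOrbit (s.ne_zero i) hβ) hβpos
  have hβ' := rootReflection_mem_reflectionOrbit (hS.basis_mem j) hβ
  refine ⟨j, 2 * ⟪s j, β⟫ / ⟪s j, s j⟫, div_pos (mul_pos two_pos hj)
    (real_inner_self_pos.2 (s.ne_zero j)), hβ', ?_⟩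
  refine (hS.repr_nonneg_or_nonpos _ (hsub hβ')).resolve_right fun hneg => hβi ?_
  have hβj : β = s.repr β j • s j := s.eq_smul_of_repr_eq_zero fun k hk =>
    le_antisymm (by simpa [rootReflection, Finsupp.single_apply, Ne.symm hk] using hneg k) (hβpos k)
  have : β ∈ ({s j, -s j} : Set V) := by
    rw [← hS.reduced _ (hS.basis_mem j)]
    exact ⟨⟨_, hβj⟩, hsub hβ⟩
  rcases this with rfl | rfl
  · rw [honly j hβ]
  · exact absurd (hβpos j) (by simp)

theorem inner_le_inner_of_mem_reflectionOrbit_of_repr_nonneg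
    (hS : IsSimpleSystem R s) (honly : ∀ j, s j ∈ reflectionOrbit R (s i) → j = i)
    (hy : ∀ j, 0 ≤ ⟪s j, y⟫) (hβ : β ∈ reflectionOrbit R (s i)) (hβpos : ∀ j, 0 ≤ s.repr β j) :
    ⟪s i, y⟫ ≤ ⟪β, y⟫ := by
  by_contra! hlt
  let S := {γ ∈ reflectionOrbit R (s i) | (∀ j, 0 ≤ s.repr γ j) ∧ ⟪γ, y⟫ < ⟪s i, y⟫}
  have hSfin : S.Finite := hS.finite.subset fun γ hγ =>
    reflectionOrbit_subset hS.image_rootReflection (hS.basis_mem i) hγ.1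
  obtain ⟨γ, ⟨hγ, hγpos, hγlt⟩, hmin⟩ := S.exists_min_image s.sumCoords hSfin ⟨β, hβ, hβpos, hlt⟩
  obtain ⟨j, t, ht, hγ', hγ'pos⟩ :=
    hS.exists_sub_smul_mem_reflectionOrbit honly hγ hγpos (by rintro rfl; exact hγlt.false)
  have hle : ⟪γ - t • s j, y⟫ ≤ ⟪γ, y⟫ := by
    rw [inner_sub_left, real_inner_smul_left, sub_le_self_iff]
    exact mul_nonneg ht.le (hy j)
  have := hmin _ ⟨hγ', hγ'pos, hle.trans_lt hγlt⟩
  rw [map_sub, map_smul, s.sumCoords_self_apply, smul_eq_mul, mul_one] at this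
  linarith

theorem inner_le_inner_of_mem_reflectionOrbit
    (hS : IsSimpleSystem R s) (honly : ∀ j, s j ∈ reflectionOrbit R (s i) → j = i)
    (hy : ∀ j, 0 ≤ ⟪s j, y⟫) (hβ : β ∈ reflectionOrbit R (s i)) (hβy : 0 ≤ ⟪β, y⟫) :
    ⟪s i, y⟫ ≤ ⟪β, y⟫ := by
  rcases hS.repr_nonneg_or_nonpos β
    (reflectionOrbit_subset hS.image_rootReflection (hS.basis_mem i) hβ) with hpos | hneg
  · exact hS.inner_le_inner_of_mem_reflectionOrbit_of_repr_nonneg honly hy hβ hpos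
  · have := hS.inner_le_inner_of_mem_reflectionOrbit_of_repr_nonneg honly hy
      (neg_mem_reflectionOrbit hS.image_rootReflection (hS.basis_mem i) (s.ne_zero i) hβ)
      (fun j => by simpa using hneg j)
    rw [inner_neg_left] at this
    linarith

end IsSimpleSystem

end

theorem union_chambers_eq_union_orbit_general {V : Type*} [NormedAddCommGroup V]
    [InnerProductSpace ℝ V] {n : ℕ}
    (R : Finset V)
    (hRrefl : ∀ α ∈ R, rootReflection α '' (R : Set V) = (R : Set V))
    (hRred : ∀ α ∈ R, {x : V | ∃ c : ℝ, x = c • α} ∩ (R : Set V) = {α, -α})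
    (s : Module.Basis (Fin n) ℝ V) (hsR : ∀ j, s j ∈ R)
    (hsimple : ∀ α ∈ R, (∀ j, 0 ≤ s.repr α j) ∨ (∀ j, s.repr α j ≤ 0))
    (W : Subgroup (V ≃ₗᵢ[ℝ] V))
    (hW : W = Subgroup.closure {g : V ≃ₗᵢ[ℝ] V | ∃ α ∈ R, ∀ v, g v = rootReflection α v})
    (C : Set V) (hC : C = {x : V | ∀ j, 0 ≤ ⟪s j, x⟫})
    (i : Fin n)
    (Ri : Set V) (hRi : Ri = {x : V | ∃ w ∈ W, x = w (s i)})
    (honly : ∀ j : Fin n, s j ∈ Ri → j = i) :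
    ∀ ε : ℝ, 0 < ε →
      (⋃ w ∈ W, {x : V | x ∈ (w : V ≃ₗᵢ[ℝ] V) '' C ∧
          0 ≤ ⟪(w : V ≃ₗᵢ[ℝ] V) (s i), x⟫ ∧ ⟪(w : V ≃ₗᵢ[ℝ] V) (s i), x⟫ ≤ ε}) =
      ⋃ α ∈ Ri, {x : V | 0 ≤ ⟪α, x⟫ ∧ ⟪α, x⟫ ≤ ε} := by
  subst hW hC hRi
  have hS : IsSimpleSystem (R : Set V) s := ⟨R.finite_toSet, hRrefl, hRred, hsR, hsimple⟩
  have hspan : span ℝ (R : Set V) = ⊤ := eq_top_mono (span_mono (range_subset_iff.2 hsR)) s.span_eq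
  have := finite_reflectionGroup hS.finite hspan hRrefl
  obtain ⟨d, hd⟩ := s.exists_forall_inner_pos
  intro ε _
  ext x
  simp only [mem_iUnion, mem_ofPred_eq]
  constructor
  · rintro ⟨w, hw, -, h⟩
    exact ⟨w (s i), ⟨w, hw, rfl⟩, h⟩
  · rintro ⟨_, ⟨u, hu, rfl⟩, h0, hε⟩
    obtain ⟨w, hw, hy⟩ := exists_mem_symm_apply_mem_chamber s
      (fun j => reflection_mem_reflectionGroup (hsR j)) hd x
    have hβ : w.symm (u (s i)) ∈ reflectionOrbit R (s i) := ⟨w⁻¹ * u, mul_mem (inv_mem hw) hu, rfl⟩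
    have hβy : ⟪w.symm (u (s i)), w.symm x⟫ = ⟪u (s i), x⟫ := w.symm.inner_map_map _ _
    refine ⟨w, hw, ⟨w.symm x, hy, w.apply_symm_apply x⟩, ?_⟩
    rw [LinearIsometryEquiv.inner_map_eq_flip]
    exact ⟨hy i, (hS.inner_le_inner_of_mem_reflectionOrbit honly hy hβ (hβy ▸ h0)).trans (hβy ▸ hε)⟩

/-- Let `R` be a reduced root system in `V` whose simple system
`s : Fin n → V` is a basis of `V`, with reflection group `W`, closed Weyl chamber
`C̄` and orbit `Rⁱ = {w (s i) | w ∈ W}` of a simple root `s i`.  If `s i` is the only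
simple root lying in `Rⁱ`, then for every `ε > 0`,
`⋃_{w ∈ W} {x ∈ w C̄ : 0 ≤ ⟪w (s i), x⟫ ≤ ε} = ⋃_{α ∈ Rⁱ} {x : 0 ≤ ⟪α, x⟫ ≤ ε}`. -/
theorem union_chambers_eq_union_orbit {V : Type*} [NormedAddCommGroup V]
    [InnerProductSpace ℝ V] {n : ℕ}
    (R : Finset V) (hR0 : (0 : V) ∉ R)
    (hRrefl : ∀ α ∈ R, rootReflection α '' (R : Set V) = (R : Set V))
    (hRred : ∀ α ∈ R, {x : V | ∃ c : ℝ, x = c • α} ∩ (R : Set V) = {α, -α})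
    (s : Module.Basis (Fin n) ℝ V) (hsR : ∀ j, s j ∈ R)
    (hsimple : ∀ α ∈ R, (∀ j, 0 ≤ s.repr α j) ∨ (∀ j, s.repr α j ≤ 0))
    (W : Subgroup (V ≃ₗᵢ[ℝ] V))
    (hW : W = Subgroup.closure {g : V ≃ₗᵢ[ℝ] V | ∃ α ∈ R, ∀ v, g v = rootReflection α v})
    (C : Set V) (hC : C = {x : V | ∀ j, 0 ≤ ⟪s j, x⟫})
    (i : Fin n)
    (Ri : Set V) (hRi : Ri = {x : V | ∃ w ∈ W, x = w (s i)})
    (honly : ∀ j : Fin n, s j ∈ Ri → j = i) :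
    ∀ ε : ℝ, 0 < ε →
      (⋃ w ∈ W, {x : V | x ∈ (w : V ≃ₗᵢ[ℝ] V) '' C ∧
          0 ≤ ⟪(w : V ≃ₗᵢ[ℝ] V) (s i), x⟫ ∧ ⟪(w : V ≃ₗᵢ[ℝ] V) (s i), x⟫ ≤ ε}) =
      ⋃ α ∈ Ri, {x : V | 0 ≤ ⟪α, x⟫ ∧ ⟪α, x⟫ ≤ ε} :=
  union_chambers_eq_union_orbit_general R hRrefl hRred s hsR hsimple W hW C hC i Ri hRi honly
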